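/- arXiv:1506.03039 — 5 statements merged into one kernel-verified Lean document; each statement's English description precedes it below -/
import Mathlib

section
/- For any constants c1, c2, c3 > 0 and any finitely supported probability measure Q on X, min(c1, c2, c3) · S(Q, T_P, G_‖·‖) ≤ S(Q, T_P, G^{c1:3}_‖·‖) ≤ max(c1, c2, c3) · S(Q, T_P, G_‖·‖). -/
open MeasureTheory Filter Finset

noncomputable section

namespace Stein

variable {d : ℕ}

/-- `N` is a norm on `ℝ^d` (represented as a real-valued function on `Fin d → ℝ`). -/
def IsNorm (N : (Fin d → ℝ) → ℝ) : Prop :=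
  (∀ v, 0 ≤ N v) ∧ (∀ v, N v = 0 ↔ v = 0) ∧
    (∀ (c : ℝ) (v), N (c • v) = |c| * N v) ∧ (∀ v w, N (v + w) ≤ N v + N w)

/-- The dual norm `‖w‖* = sup {⟨w, v⟩ : N v = 1}` on vectors. -/
def dualVec (N : (Fin d → ℝ) → ℝ) (w : Fin d → ℝ) : ℝ :=
  sSup {r | ∃ v : Fin d → ℝ, N v = 1 ∧ r = ∑ i, w i * v i}

/-- Matrix-vector multiplication. -/
def matVec (M : Fin d → Fin d → ℝ) (v : Fin d → ℝ) : Fin d → ℝ :=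
  fun j => ∑ k, M j k * v k

/-- The dual norm `‖M‖* = sup {‖M v‖* : N v = 1}` on matrices. -/
def dualMat (N : (Fin d → ℝ) → ℝ) (M : Fin d → Fin d → ℝ) : ℝ :=
  sSup {r | ∃ v : Fin d → ℝ, N v = 1 ∧ r = dualVec N (matVec M v)}

/-- The gradient of a scalar function, as a vector of partial derivatives. -/
def gradv (f : (Fin d → ℝ) → ℝ) (x : Fin d → ℝ) : Fin d → ℝ :=
  fun j => fderiv ℝ f x (Pi.single j 1)

/-- `∇ log p`. -/
def gradLog (p : (Fin d → ℝ) → ℝ) (x : Fin d → ℝ) : Fin d → ℝ :=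
  gradv (fun y => Real.log (p y)) x

/-- The gradient matrix `(∇g(x))_{jk} = ∂_k g_j(x)` of a vector-valued function. -/
def gradMat (g : (Fin d → ℝ) → Fin d → ℝ) (x : Fin d → ℝ) : Fin d → Fin d → ℝ :=
  fun j k => fderiv ℝ (fun y => g y j) x (Pi.single k 1)

/-- The Langevin Stein operator `(T_P g)(x) = ⟨g(x), ∇log p(x)⟩ + ∑_j ∂_j g_j(x)`. -/
def steinOp (p : (Fin d → ℝ) → ℝ) (g : (Fin d → ℝ) → Fin d → ℝ) (x : Fin d → ℝ) : ℝ :=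
  (∑ j, g x j * gradLog p x j) + ∑ j, gradMat g x j j

/-- `n` is an outward unit normal vector to `X` at the boundary point `x`. -/
def isOutwardNormal (X : Set (Fin d → ℝ)) (x n : Fin d → ℝ) : Prop :=
  x ∈ frontier X ∧ (∑ i, n i * n i) = 1 ∧ ∀ y ∈ X, (∑ i, n i * (y i - x i)) ≤ 0

/-- The (non-uniform) classical Stein set `G^{c1:3}_‖·‖`; the classical Stein set is
`steinSet N X 1 1 1`.  The boundary condition `⟨g(x), n(x)⟩ = 0` is imposed at every
boundary point at which the outward unit normal is defined (i.e. unique). -/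
def steinSet (N : (Fin d → ℝ) → ℝ) (X : Set (Fin d → ℝ)) (c1 c2 c3 : ℝ) :
    Set ((Fin d → ℝ) → Fin d → ℝ) :=
  {g | (∀ x ∈ X, DifferentiableAt ℝ g x) ∧
       (∀ x ∈ X, DifferentiableAt ℝ (fun y => gradMat g y) x) ∧
       (∀ x ∈ X, dualVec N (g x) ≤ c1) ∧
       (∀ x ∈ X, dualMat N (gradMat g x) ≤ c2) ∧
       (∀ x ∈ X, ∀ y ∈ X, dualMat N (gradMat g x - gradMat g y) ≤ c3 * N (x - y)) ∧
       (∀ x n, isOutwardNormal X x n → (∃! m, isOutwardNormal X x m) →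
          (∑ i, g x i * n i) = 0)}

/-- The Stein discrepancy of a finitely supported measure with support `S` and
mass function `q`, over the function class `G`. -/
def steinDiscr (N : (Fin d → ℝ) → ℝ) (p : (Fin d → ℝ) → ℝ)
    (S : Finset (Fin d → ℝ)) (q : (Fin d → ℝ) → ℝ)
    (G : Set ((Fin d → ℝ) → Fin d → ℝ)) : ℝ :=
  sSup {r | ∃ g ∈ G, r = |∑ x ∈ S, q x * steinOp p g x|}

open scoped Pointwise

/-!
Rescaling `g ↦ c • g` maps `steinSet N X a b e` onto `steinSet N X (c * a) (c * b) (c * e)` and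
multiplies `T_P g`, hence every value `|∑ q (T_P g)|`, by `c`. So the values over `G^{c1:3}`
contain `min c1 (min c2 c3)` times, and are contained in `max c1 (max c2 c3)` times, the values
over the classical Stein set, and the bounds pass to suprema.
-/

theorem _root_.Real.mul_sSup_le_sSup_and_sSup_le_mul_sSup {s t : Set ℝ} {a b : ℝ}
    (ha : 0 < a) (hb : 0 ≤ b) (hst : a • s ⊆ t) (hts : t ⊆ b • s) :
    a * sSup s ≤ sSup t ∧ sSup t ≤ b * sSup s := by
  rcases s.eq_empty_or_nonempty with rfl | hs
  · rw [Set.smul_set_empty, Set.subset_empty_iff] at hts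
    simp [hts]
  by_cases hbdd : BddAbove s
  · have hbs : BddAbove (b • s) := hbdd.smul_of_nonneg hb
    rw [← smul_eq_mul a, ← smul_eq_mul b, ← Real.sSup_smul_of_nonneg ha.le,
      ← Real.sSup_smul_of_nonneg hb]
    exact ⟨csSup_le_csSup (hbs.mono hts) (hs.smul_set) hst,
      csSup_le_csSup hbs (hs.smul_set.mono hst) hts⟩
  · have htbdd : ¬ BddAbove t := fun h =>
      hbdd ((bddAbove_smul_iff_of_pos ha).1 (h.mono hst))
    simp [Real.sSup_of_not_bddAbove hbdd, Real.sSup_of_not_bddAbove htbdd]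

section DualNorm

variable (N : (Fin d → ℝ) → ℝ)

lemma dualVec_smul {c : ℝ} (hc : 0 < c) (w : Fin d → ℝ) :
    dualVec N (c • w) = c * dualVec N w := by
  have : {r | ∃ v, N v = 1 ∧ r = ∑ i, (c • w) i * v i} =
      c • {r | ∃ v, N v = 1 ∧ r = ∑ i, w i * v i} := by
    ext r
    simp [Set.mem_smul_set, Finset.mul_sum, mul_assoc, eq_comm]
  rw [dualVec, dualVec, this, Real.sSup_smul_of_nonneg hc.le, smul_eq_mul]

lemma matVec_smul (c : ℝ) (M : Fin d → Fin d → ℝ) (v : Fin d → ℝ) :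
    matVec (c • M) v = c • matVec M v := by
  funext j
  simp [matVec, Finset.mul_sum, mul_assoc]

lemma dualMat_smul {c : ℝ} (hc : 0 < c) (M : Fin d → Fin d → ℝ) :
    dualMat N (c • M) = c * dualMat N M := by
  have : {r | ∃ v, N v = 1 ∧ r = dualVec N (matVec (c • M) v)} =
      c • {r | ∃ v, N v = 1 ∧ r = dualVec N (matVec M v)} := by
    ext r
    simp [Set.mem_smul_set, matVec_smul, dualVec_smul N hc, eq_comm]
  rw [dualMat, dualMat, this, Real.sSup_smul_of_nonneg hc.le, smul_eq_mul]

end DualNorm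

lemma gradMat_smul (c : ℝ) (g : (Fin d → ℝ) → Fin d → ℝ) : gradMat (c • g) = c • gradMat g := by
  funext x j k
  change fderiv ℝ (c • fun y => g y j) x (Pi.single k 1) = c * gradMat g x j k
  rw [fderiv_const_smul_field]
  rfl

lemma steinOp_smul (p : (Fin d → ℝ) → ℝ) (c : ℝ) (g : (Fin d → ℝ) → Fin d → ℝ)
    (x : Fin d → ℝ) : steinOp p (c • g) x = c * steinOp p g x := by
  simp [steinOp, gradMat_smul, Finset.mul_sum, mul_add, mul_assoc]

section SteinSet

variable (N : (Fin d → ℝ) → ℝ) (X : Set (Fin d → ℝ))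

lemma smul_mem_steinSet {a b e c : ℝ} (hc : 0 < c) {g : (Fin d → ℝ) → Fin d → ℝ}
    (hg : g ∈ steinSet N X a b e) : c • g ∈ steinSet N X (c * a) (c * b) (c * e) := by
  obtain ⟨hdiff, hdiff_grad, hbound, hbound_grad, hlip, hnormal⟩ := hg
  refine ⟨fun x hx => (hdiff x hx).const_smul c, fun x hx => ?_, fun x hx => ?_,
    fun x hx => ?_, fun x hx y hy => ?_, fun x n hn huniq => ?_⟩
  · rw [gradMat_smul]
    exact (hdiff_grad x hx).const_smul c
  · rw [Pi.smul_apply, dualVec_smul N hc]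
    exact mul_le_mul_of_nonneg_left (hbound x hx) hc.le
  · rw [gradMat_smul, Pi.smul_apply, dualMat_smul N hc]
    exact mul_le_mul_of_nonneg_left (hbound_grad x hx) hc.le
  · rw [gradMat_smul, Pi.smul_apply, Pi.smul_apply, ← smul_sub, dualMat_smul N hc, mul_assoc]
    exact mul_le_mul_of_nonneg_left (hlip x hx y hy) hc.le
  · simp [mul_assoc, ← Finset.mul_sum, hnormal x n hn huniq]

lemma steinSet_mono (hN : ∀ v, 0 ≤ N v) {a b e a' b' e' : ℝ} (ha : a ≤ a') (hb : b ≤ b')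
    (he : e ≤ e') : steinSet N X a b e ⊆ steinSet N X a' b' e' := by
  rintro g ⟨hdiff, hdiff_grad, hbound, hbound_grad, hlip, hnormal⟩
  exact ⟨hdiff, hdiff_grad, fun x hx => (hbound x hx).trans ha,
    fun x hx => (hbound_grad x hx).trans hb,
    fun x hx y hy => (hlip x hx y hy).trans (mul_le_mul_of_nonneg_right he (hN _)), hnormal⟩

end SteinSet

section SteinValues

variable (p : (Fin d → ℝ) → ℝ) (S : Finset (Fin d → ℝ)) (q : (Fin d → ℝ) → ℝ)

def steinValues (G : Set ((Fin d → ℝ) → Fin d → ℝ)) : Set ℝ :=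
  {r | ∃ g ∈ G, r = |∑ x ∈ S, q x * steinOp p g x|}

lemma steinDiscr_eq_sSup_steinValues (N : (Fin d → ℝ) → ℝ)
    (G : Set ((Fin d → ℝ) → Fin d → ℝ)) :
    steinDiscr N p S q G = sSup (steinValues p S q G) :=
  rfl

lemma smul_steinValues_subset {c : ℝ} (hc : 0 < c) {G G' : Set ((Fin d → ℝ) → Fin d → ℝ)}
    (hGG' : ∀ g ∈ G, c • g ∈ G') : c • steinValues p S q G ⊆ steinValues p S q G' := by
  rintro _ ⟨_, ⟨g, hg, rfl⟩, rfl⟩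
  refine ⟨c • g, hGG' g hg, ?_⟩
  simp [steinOp_smul, mul_left_comm _ c, ← Finset.mul_sum, abs_mul, abs_of_pos hc]

end SteinValues

theorem steinDiscr_nonuniform_equiv_general {d : ℕ} (N : (Fin d → ℝ) → ℝ) (hN : IsNorm N)
    (X : Set (Fin d → ℝ)) (p : (Fin d → ℝ) → ℝ)
    (c1 c2 c3 : ℝ) (hc1 : 0 < c1) (hc2 : 0 < c2) (hc3 : 0 < c3)
    (S : Finset (Fin d → ℝ)) (q : (Fin d → ℝ) → ℝ) :
    min c1 (min c2 c3) * steinDiscr N p S q (steinSet N X 1 1 1) ≤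
        steinDiscr N p S q (steinSet N X c1 c2 c3) ∧
      steinDiscr N p S q (steinSet N X c1 c2 c3) ≤
        max c1 (max c2 c3) * steinDiscr N p S q (steinSet N X 1 1 1) := by
  set cmin := min c1 (min c2 c3)
  set cmax := max c1 (max c2 c3)
  have hmin : 0 < cmin := lt_min hc1 (lt_min hc2 hc3)
  have hmax : 0 < cmax := lt_max_of_lt_left hc1
  have hle_one : ∀ c ≤ cmax, cmax⁻¹ * c ≤ 1 := fun c hc => inv_mul_le_one_of_le₀ hc hmax.le
  have hlower : cmin • steinValues p S q (steinSet N X 1 1 1) ⊆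
      steinValues p S q (steinSet N X c1 c2 c3) :=
    smul_steinValues_subset p S q hmin fun g hg =>
      steinSet_mono N X hN.1 (by simp [cmin]) (by simp [cmin]) (by simp [cmin])
        (smul_mem_steinSet N X hmin hg)
  have hupper : cmax⁻¹ • steinValues p S q (steinSet N X c1 c2 c3) ⊆
      steinValues p S q (steinSet N X 1 1 1) :=
    smul_steinValues_subset p S q (inv_pos.2 hmax) fun g hg =>
      steinSet_mono N X hN.1 (hle_one _ (by simp [cmax])) (hle_one _ (by simp [cmax]))
        (hle_one _ (by simp [cmax])) (smul_mem_steinSet N X (inv_pos.2 hmax) hg)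
  simp only [steinDiscr_eq_sSup_steinValues]
  exact Real.mul_sSup_le_sSup_and_sSup_le_mul_sSup hmin hmax.le hlower
    ((Set.subset_smul_set_iff₀ hmax.ne').2 hupper)

/-- Proposition 4: equivalence of non-uniform Stein discrepancies. -/
theorem steinDiscr_nonuniform_equiv {d : ℕ} (N : (Fin d → ℝ) → ℝ) (hN : IsNorm N)
    (X : Set (Fin d → ℝ)) (hXopen : IsOpen X) (hXconv : Convex ℝ X)
    (p : (Fin d → ℝ) → ℝ) (hppos : ∀ x ∈ X, 0 < p x) (hpC1 : ContDiffOn ℝ 1 p X)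
    (c1 c2 c3 : ℝ) (hc1 : 0 < c1) (hc2 : 0 < c2) (hc3 : 0 < c3)
    (S : Finset (Fin d → ℝ)) (hSX : ∀ x ∈ S, x ∈ X)
    (q : (Fin d → ℝ) → ℝ) (hq0 : ∀ x ∈ S, 0 ≤ q x) (hq1 : ∑ x ∈ S, q x = 1) :
    min c1 (min c2 c3) * steinDiscr N p S q (steinSet N X 1 1 1) ≤
        steinDiscr N p S q (steinSet N X c1 c2 c3) ∧
      steinDiscr N p S q (steinSet N X c1 c2 c3) ≤
        max c1 (max c2 c3) * steinDiscr N p S q (steinSet N X 1 1 1) :=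
  steinDiscr_nonuniform_equiv_general N hN X p c1 c2 c3 hc1 hc2 hc3 S q

end Stein
end
end

section
/- Let ‖·‖ be a norm on ℝ^d with dual norms ‖·‖* on vectors and matrices, let V ⊂ ℝ^d be a finite set, let t ≥ 1, and let G = (V, E) be a t-spanner over V. Suppose g : V → ℝ^d and D : V → ℝ^{d×d} satisfy, for every edge (x, y) ∈ E (and its reverse): ‖D(x) − D(y)‖* ≤ ‖x − y‖ and ‖g(x) − g(y) − D(y)(x − y)‖* ≤ ½‖x − y‖². Then for every pair of points z, z' ∈ V, ‖g(z) − g(z') − D(z')(z − z')‖* ≤ t²‖z − z'‖². -/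
/-
Along a spanner path `z' = w₀, …, w_L = z` the Taylor remainder telescopes:
`R(w_{l+1}, w₀) = R(w_l, w₀) + R(w_{l+1}, w_l) + (D w_l - D w₀)(w_{l+1} - w_l)`.
The edge bounds control the middle term by `½ ‖w_{l+1} - w_l‖²` and the last one by
`S_l ‖w_{l+1} - w_l‖`, where `S_l` is the length of the path up to `w_l`; so the remainder
is at most `½ S_L² ≤ ½ t² ‖z - z'‖²`. Since `dualVec` and `dualMat` are `sSup`s
(with junk value `0` when unbounded), bounding a pairing by them needs the suprema to be
bounded, which holds because the unit sphere of `N` is compact.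
-/

open MeasureTheory Filter Finset

noncomputable section

namespace Stein

variable {d : ℕ}

/-- `(V, E)` is a `t`-spanner with respect to the norm `N`. -/
def IsSpanner {d : ℕ} (N : (Fin d → ℝ) → ℝ) (V : Finset (Fin d → ℝ))
    (E : Set ((Fin d → ℝ) × (Fin d → ℝ))) (t : ℝ) : Prop :=
  (∀ e ∈ E, e.1 ∈ V ∧ e.2 ∈ V) ∧
    ∀ x ∈ V, ∀ y ∈ V, x ≠ y →
      ∃ (L : ℕ) (z : ℕ → Fin d → ℝ), z 0 = x ∧ z L = y ∧
        (∀ l < L, (z l, z (l + 1)) ∈ E) ∧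
        (∑ l ∈ Finset.range L, N (z l - z (l + 1))) ≤ t * N (x - y)

open Matrix

def pathLength (N : (Fin d → ℝ) → ℝ) (w : ℕ → Fin d → ℝ) (L : ℕ) : ℝ :=
  ∑ l ∈ Finset.range L, N (w (l + 1) - w l)

def taylorRemainder (g : (Fin d → ℝ) → Fin d → ℝ) (D : (Fin d → ℝ) → Matrix (Fin d) (Fin d) ℝ)
    (x y : Fin d → ℝ) : Fin d → ℝ :=
  g x - g y - D y *ᵥ (x - y)

theorem pathLength_succ (N : (Fin d → ℝ) → ℝ) (w : ℕ → Fin d → ℝ) (L : ℕ) :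
    pathLength N w (L + 1) = pathLength N w L + N (w (L + 1) - w L) :=
  Finset.sum_range_succ _ _

theorem taylorRemainder_add (g : (Fin d → ℝ) → Fin d → ℝ)
    (D : (Fin d → ℝ) → Matrix (Fin d) (Fin d) ℝ) (x y z : Fin d → ℝ) :
    taylorRemainder g D x z =
      taylorRemainder g D y z + taylorRemainder g D x y + (D y - D z) *ᵥ (x - y) := by
  simp only [taylorRemainder, mulVec_sub, sub_mulVec]
  abel

section IsNorm

variable {N : (Fin d → ℝ) → ℝ}

theorem IsNorm.nonneg (hN : IsNorm N) (v : Fin d → ℝ) : 0 ≤ N v := hN.1 v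

theorem IsNorm.eq_zero_iff (hN : IsNorm N) (v : Fin d → ℝ) : N v = 0 ↔ v = 0 := hN.2.1 v

theorem IsNorm.map_smul (hN : IsNorm N) (c : ℝ) (v : Fin d → ℝ) : N (c • v) = |c| * N v :=
  hN.2.2.1 c v

theorem IsNorm.add_le (hN : IsNorm N) (v w : Fin d → ℝ) : N (v + w) ≤ N v + N w :=
  hN.2.2.2 v w

theorem IsNorm.map_zero (hN : IsNorm N) : N 0 = 0 := (hN.eq_zero_iff 0).2 rfl

theorem IsNorm.pos (hN : IsNorm N) {v : Fin d → ℝ} (hv : v ≠ 0) : 0 < N v :=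
  (hN.nonneg v).lt_of_ne fun h => hv ((hN.eq_zero_iff v).1 h.symm)

theorem IsNorm.map_sub_rev (hN : IsNorm N) (x y : Fin d → ℝ) : N (x - y) = N (y - x) := by
  rw [← neg_sub, ← neg_one_smul ℝ (y - x), hN.map_smul, abs_neg, abs_one, one_mul]

theorem IsNorm.convexOn (hN : IsNorm N) : ConvexOn ℝ Set.univ N := by
  refine ⟨convex_univ, fun x _ y _ a b ha hb _ => ?_⟩
  calc N (a • x + b • y) ≤ N (a • x) + N (b • y) := hN.add_le _ _
    _ = a • N x + b • N y := by
      rw [hN.map_smul, hN.map_smul, abs_of_nonneg ha, abs_of_nonneg hb, smul_eq_mul, smul_eq_mul]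

theorem IsNorm.continuous (hN : IsNorm N) : Continuous N :=
  hN.convexOn.locallyLipschitz.continuous

theorem IsNorm.isBounded_unitSphere (hN : IsNorm N) :
    Bornology.IsBounded {v : Fin d → ℝ | N v = 1} := by
  rcases subsingleton_or_nontrivial (Fin d → ℝ) with _ | _
  · exact (Set.toFinite _).isBounded
  obtain ⟨v₀, hv₀, hmin⟩ := (isCompact_sphere (0 : Fin d → ℝ) 1).exists_isMinOn
    (NormedSpace.sphere_nonempty.2 zero_le_one) hN.continuous.continuousOn
  have hv₀pos : 0 < N v₀ := hN.pos (by rintro rfl; simp at hv₀)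
  refine isBounded_iff_forall_norm_le.2 ⟨(N v₀)⁻¹, fun v (hv : N v = 1) => ?_⟩
  have hv0 : v ≠ 0 := by rintro rfl; simp [hN.map_zero] at hv
  have hnorm : 0 < ‖v‖ := norm_pos_iff.2 hv0
  -- `v / ‖v‖` lies on the sup-norm sphere, where `N` is at least `N v₀`
  have hle : N v₀ ≤ ‖v‖⁻¹ := by
    have := hmin (a := ‖v‖⁻¹ • v) (by simp [norm_smul, hnorm.ne'])
    rwa [Set.mem_ofPred_eq, hN.map_smul, hv, mul_one, abs_of_pos (inv_pos.2 hnorm)] at this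
  exact (le_inv_comm₀ hv₀pos hnorm).1 hle

theorem IsNorm.isCompact_unitSphere (hN : IsNorm N) : IsCompact {v : Fin d → ℝ | N v = 1} :=
  Metric.isCompact_of_isClosed_isBounded (isClosed_eq hN.continuous continuous_const)
    hN.isBounded_unitSphere

theorem dualVec_le {B : ℝ} (hB : 0 ≤ B) (w : Fin d → ℝ)
    (h : ∀ v, N v = 1 → w ⬝ᵥ v ≤ B) : dualVec N w ≤ B :=
  Real.sSup_le (by rintro _ ⟨v, hv, rfl⟩; exact h v hv) hB

theorem IsNorm.dotProduct_le_dualVec (hN : IsNorm N) (w : Fin d → ℝ) {v : Fin d → ℝ}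
    (hv : N v = 1) : w ⬝ᵥ v ≤ dualVec N w := by
  obtain ⟨B, hB⟩ := hN.isCompact_unitSphere.bddAbove_image
    (f := fun v => w ⬝ᵥ v) (by fun_prop)
  exact le_csSup ⟨B, by rintro _ ⟨u, hu, rfl⟩; exact hB ⟨u, hu, rfl⟩⟩ ⟨v, hv, rfl⟩

theorem IsNorm.dualVec_mulVec_le_dualMat (hN : IsNorm N) (M : Matrix (Fin d) (Fin d) ℝ)
    {v : Fin d → ℝ} (hv : N v = 1) : dualVec N (M *ᵥ v) ≤ dualMat N M := by
  obtain ⟨B, hB⟩ := (hN.isCompact_unitSphere.prod hN.isCompact_unitSphere).bddAbove_image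
    (f := fun p => M *ᵥ p.1 ⬝ᵥ p.2) (by fun_prop)
  have hbdd : ∀ u, N u = 1 → dualVec N (M *ᵥ u) ≤ max B 0 := fun u hu =>
    dualVec_le (le_max_right _ _) _ fun u' hu' =>
      (hB ⟨(u, u'), ⟨hu, hu'⟩, rfl⟩).trans (le_max_left _ _)
  exact le_csSup ⟨max B 0, by rintro _ ⟨u, hu, rfl⟩; exact hbdd u hu⟩ ⟨v, hv, rfl⟩

theorem IsNorm.mulVec_dotProduct_le (hN : IsNorm N) (M : Matrix (Fin d) (Fin d) ℝ)
    (u : Fin d → ℝ) {v : Fin d → ℝ} (hv : N v = 1) :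
    M *ᵥ u ⬝ᵥ v ≤ dualMat N M * N u := by
  rcases eq_or_ne u 0 with rfl | hu
  · simp [hN.map_zero]
  have hNu : 0 < N u := hN.pos hu
  have hunit : N ((N u)⁻¹ • u) = 1 := by
    rw [hN.map_smul, abs_of_pos (inv_pos.2 hNu), inv_mul_cancel₀ hNu.ne']
  have hscaled := (hN.dotProduct_le_dualVec _ hv).trans (hN.dualVec_mulVec_le_dualMat M hunit)
  rw [mulVec_smul, smul_dotProduct, smul_eq_mul, inv_mul_le_iff₀ hNu] at hscaled
  linarith

theorem IsNorm.pathLength_nonneg (hN : IsNorm N) (w : ℕ → Fin d → ℝ) (L : ℕ) :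
    0 ≤ pathLength N w L :=
  Finset.sum_nonneg fun _ _ => hN.nonneg _

variable {D : (Fin d → ℝ) → Matrix (Fin d) (Fin d) ℝ} {w : ℕ → Fin d → ℝ}

theorem IsNorm.sub_mulVec_dotProduct_le (hN : IsNorm N) {L : ℕ}
    (hD : ∀ l < L, dualMat N (D (w (l + 1)) - D (w l)) ≤ N (w (l + 1) - w l))
    (u : Fin d → ℝ) {v : Fin d → ℝ} (hv : N v = 1) :
    (D (w L) - D (w 0)) *ᵥ u ⬝ᵥ v ≤ pathLength N w L * N u := by
  induction L with
  | zero => simp [pathLength]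
  | succ L ih =>
    have hsplit : D (w (L + 1)) - D (w 0) = (D (w (L + 1)) - D (w L)) + (D (w L) - D (w 0)) := by
      abel
    have hlast := (hN.mulVec_dotProduct_le (D (w (L + 1)) - D (w L)) u hv).trans
      (mul_le_mul_of_nonneg_right (hD L L.lt_add_one) (hN.nonneg u))
    have hinit := ih fun l hl => hD l (hl.trans L.lt_add_one)
    rw [hsplit, add_mulVec, add_dotProduct, pathLength_succ, add_mul]
    linarith

theorem IsNorm.dualVec_taylorRemainder_le (hN : IsNorm N) {g : (Fin d → ℝ) → Fin d → ℝ}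
    {L : ℕ} (hD : ∀ l < L, dualMat N (D (w (l + 1)) - D (w l)) ≤ N (w (l + 1) - w l))
    (hg : ∀ l < L, dualVec N (taylorRemainder g D (w (l + 1)) (w l)) ≤
      1 / 2 * N (w (l + 1) - w l) ^ 2) :
    dualVec N (taylorRemainder g D (w L) (w 0)) ≤ 1 / 2 * pathLength N w L ^ 2 := by
  refine dualVec_le (by positivity) _ fun v hv => ?_
  induction L with
  | zero => simp [taylorRemainder, pathLength]
  | succ L ih =>
    have hinit := ih (fun l hl => hD l (hl.trans L.lt_add_one))
      (fun l hl => hg l (hl.trans L.lt_add_one))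
    have hedge := (hN.dotProduct_le_dualVec _ hv).trans (hg L L.lt_add_one)
    have hcross := hN.sub_mulVec_dotProduct_le (fun l hl => hD l (hl.trans L.lt_add_one))
      (w (L + 1) - w L) hv
    rw [taylorRemainder_add g D (w (L + 1)) (w L) (w 0), add_dotProduct, add_dotProduct,
      pathLength_succ]
    linarith

end IsNorm

theorem IsSpanner.exists_pathLength_le {N : (Fin d → ℝ) → ℝ} (hN : IsNorm N)
    {V : Finset (Fin d → ℝ)} {E : Set ((Fin d → ℝ) × (Fin d → ℝ))} {t : ℝ}
    (hE : IsSpanner N V E t) {x y : Fin d → ℝ} (hx : x ∈ V) (hy : y ∈ V) :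
    ∃ (L : ℕ) (w : ℕ → Fin d → ℝ), w 0 = x ∧ w L = y ∧ (∀ l < L, (w l, w (l + 1)) ∈ E) ∧
      pathLength N w L ≤ t * N (y - x) := by
  rcases eq_or_ne x y with rfl | hxy
  · exact ⟨0, fun _ => x, rfl, rfl, by simp, by simp [pathLength, hN.map_zero]⟩
  obtain ⟨L, w, hw0, hwL, hwE, hlen⟩ := hE.2 x hx y hy hxy
  refine ⟨L, w, hw0, hwL, hwE, ?_⟩
  simpa only [pathLength, hN.map_sub_rev (w _) (w (_ + 1)), hN.map_sub_rev y x] using hlen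

theorem spanner_taylor_extension_general {d : ℕ} (N : (Fin d → ℝ) → ℝ) (hN : IsNorm N)
    (V : Finset (Fin d → ℝ)) (t : ℝ)
    (E : Set ((Fin d → ℝ) × (Fin d → ℝ))) (hE : IsSpanner N V E t)
    (g : (Fin d → ℝ) → Fin d → ℝ) (D : (Fin d → ℝ) → Fin d → Fin d → ℝ)
    (hD : ∀ e ∈ E,
      dualMat N (D e.1 - D e.2) ≤ N (e.1 - e.2) ∧
      dualMat N (D e.2 - D e.1) ≤ N (e.2 - e.1) ∧
      dualVec N (g e.1 - g e.2 - matVec (D e.2) (e.1 - e.2)) ≤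
        (1 / 2) * N (e.1 - e.2) ^ 2 ∧
      dualVec N (g e.2 - g e.1 - matVec (D e.1) (e.2 - e.1)) ≤
        (1 / 2) * N (e.2 - e.1) ^ 2) :
    ∀ z ∈ V, ∀ z' ∈ V,
      dualVec N (g z - g z' - matVec (D z') (z - z')) ≤ t ^ 2 * N (z - z') ^ 2 := by
  intro z hz z' hz'
  obtain ⟨L, w, rfl, rfl, hwE, hlen⟩ := hE.exists_pathLength_le hN hz' hz
  calc dualVec N (taylorRemainder g D (w L) (w 0))
      ≤ 1 / 2 * pathLength N w L ^ 2 :=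
        hN.dualVec_taylorRemainder_le (fun l hl => (hD _ (hwE l hl)).2.1)
          (fun l hl => (hD _ (hwE l hl)).2.2.2)
    _ ≤ 1 / 2 * (t * N (w L - w 0)) ^ 2 := by gcongr; exact hN.pathLength_nonneg w L
    _ ≤ t ^ 2 * N (w L - w 0) ^ 2 := by nlinarith [sq_nonneg (t * N (w L - w 0))]

/-- edgewise first-order Taylor compatibility constraints on a
`t`-spanner extend to `t²`-second-order bounds between all pairs of vertices. -/
theorem spanner_taylor_extension {d : ℕ} (N : (Fin d → ℝ) → ℝ) (hN : IsNorm N)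
    (V : Finset (Fin d → ℝ)) (t : ℝ) (ht : 1 ≤ t)
    (E : Set ((Fin d → ℝ) × (Fin d → ℝ))) (hE : IsSpanner N V E t)
    (g : (Fin d → ℝ) → Fin d → ℝ) (D : (Fin d → ℝ) → Fin d → Fin d → ℝ)
    (hD : ∀ e ∈ E,
      dualMat N (D e.1 - D e.2) ≤ N (e.1 - e.2) ∧
      dualMat N (D e.2 - D e.1) ≤ N (e.2 - e.1) ∧
      dualVec N (g e.1 - g e.2 - matVec (D e.2) (e.1 - e.2)) ≤
        (1 / 2) * N (e.1 - e.2) ^ 2 ∧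
      dualVec N (g e.2 - g e.1 - matVec (D e.1) (e.2 - e.1)) ≤
        (1 / 2) * N (e.2 - e.1) ^ 2) :
    ∀ z ∈ V, ∀ z' ∈ V,
      dualVec N (g z - g z' - matVec (D z') (z - z')) ≤ t ^ 2 * N (z - z') ^ 2 :=
  spanner_taylor_extension_general N hN V t E hE g D hD

end Stein
end
end

section
/- Let c1, c3 > 0 and let g : ℝ → ℝ be differentiable with |g(x)| ≤ c1 for all x ∈ ℝ and with derivative g' satisfying |g'(x) − g'(y)| ≤ c3|x − y| for all x, y ∈ ℝ. Then for every x ∈ ℝ, |g(x)| ≤ c1 − g'(x)²/(2c3). -/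
/-!
Expanding `g` to second order around `x` with the Lipschitz bound on `g'` gives
`g (x + h) ≥ g x + g'(x) h - c3 h² / 2`. At `h = g'(x) / c3` the right-hand side is
`g x + g'(x)² / (2 c3)`, which `|g| ≤ c1` caps by `c1`; applying the same to `-g` bounds `-g x`.
-/

section LipschitzDeriv

variable {f : ℝ → ℝ} {C : ℝ}

theorem abs_sub_sub_deriv_mul_le_of_nonneg (hf : Differentiable ℝ f)
    (hf' : ∀ x y, |deriv f x - deriv f y| ≤ C * |x - y|) (x : ℝ) {h : ℝ} (hh : 0 ≤ h) :
    |f (x + h) - f x - deriv f x * h| ≤ C * h ^ 2 / 2 := by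
  have hφ : ∀ t, HasDerivAt (fun t => f (x + t) - f x - deriv f x * t)
      (deriv f (x + t) - deriv f x) t := fun t => by
    simpa using (((hf (x + t)).hasDerivAt.comp_const_add x t).sub_const (f x)).fun_sub
      ((hasDerivAt_id t).const_mul (deriv f x))
  have hB : ∀ t, HasDerivAt (fun t => C * t ^ 2 / 2) (C * t) t := fun t =>
    (((hasDerivAt_pow 2 t).const_mul C).div_const 2).congr_deriv (by push_cast; ring)
  -- `C t² / 2` fences the remainder: it vanishes at `0`, and its slope `C t` dominates the
  -- remainder's derivative.
  have hfence := image_norm_le_of_norm_deriv_right_le_deriv_boundary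
    (fun t _ => (hφ t).continuousAt.continuousWithinAt) (fun t _ => (hφ t).hasDerivWithinAt)
    (by simp) hB (fun t ht => by simpa [abs_of_nonneg ht.1] using hf' (x + t) x) ⟨hh, le_rfl⟩
  simpa using hfence

theorem abs_sub_sub_deriv_mul_le (hf : Differentiable ℝ f)
    (hf' : ∀ x y, |deriv f x - deriv f y| ≤ C * |x - y|) (x h : ℝ) :
    |f (x + h) - f x - deriv f x * h| ≤ C * h ^ 2 / 2 := by
  rcases le_total 0 h with hh | hh
  · exact abs_sub_sub_deriv_mul_le_of_nonneg hf hf' x hh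
  · have hf'_neg : ∀ x y,
        |deriv (fun t => f (-t)) x - deriv (fun t => f (-t)) y| ≤ C * |x - y| := by
      intro x y
      rw [deriv_comp_neg, deriv_comp_neg, neg_sub_neg, abs_sub_comm]
      simpa only [neg_sub_neg, abs_sub_comm y x] using hf' (-x) (-y)
    have hreflect := abs_sub_sub_deriv_mul_le_of_nonneg (f := fun t => f (-t))
      (hf.comp differentiable_neg) hf'_neg (-x) (neg_nonneg.2 hh)
    rw [deriv_comp_neg, neg_neg, neg_sq, ← neg_add] at hreflect
    simpa only [neg_neg, neg_mul_neg] using hreflect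

theorem le_sub_sq_deriv_div_of_le {c : ℝ} (hC : 0 < C) (hf : Differentiable ℝ f)
    (hbound : ∀ x, f x ≤ c) (hf' : ∀ x y, |deriv f x - deriv f y| ≤ C * |x - y|) (x : ℝ) :
    f x ≤ c - deriv f x ^ 2 / (2 * C) := by
  set d := deriv f x
  have htaylor := (abs_le.1 (abs_sub_sub_deriv_mul_le hf hf' x (d / C))).1
  have hgain : d * (d / C) - C * (d / C) ^ 2 / 2 = d ^ 2 / (2 * C) := by
    field_simp
    ring
  linarith [hbound (x + d / C)]

end LipschitzDeriv

theorem abs_le_sub_sq_deriv_general (c1 c3 : ℝ) (hc3 : 0 < c3)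
    (g : ℝ → ℝ) (hg : Differentiable ℝ g)
    (hbound : ∀ x, |g x| ≤ c1)
    (hlip : ∀ x y, |deriv g x - deriv g y| ≤ c3 * |x - y|) :
    ∀ x, |g x| ≤ c1 - (deriv g x) ^ 2 / (2 * c3) := by
  intro x
  have hlip_neg : ∀ x y, |deriv (-g) x - deriv (-g) y| ≤ c3 * |x - y| := by
    intro x y
    simpa only [deriv.neg, neg_sub_neg, abs_sub_comm (deriv g y)] using hlip x y
  have hupper := le_sub_sq_deriv_div_of_le hc3 hg (fun y => le_of_abs_le (hbound y)) hlip x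
  have hlower := le_sub_sq_deriv_div_of_le hc3 hg.neg
    (fun y => (neg_le_abs (g y)).trans (hbound y)) hlip_neg x
  simp only [Pi.neg_apply, deriv.neg, neg_sq] at hlower
  exact abs_le.2 ⟨by linarith, hupper⟩

/-- if `g` is differentiable, `|g| ≤ c1`, and `g'` is `c3`-Lipschitz,
then `|g(x)| ≤ c1 − g'(x)²/(2 c3)` for every `x`. -/
theorem abs_le_sub_sq_deriv (c1 c3 : ℝ) (hc1 : 0 < c1) (hc3 : 0 < c3)
    (g : ℝ → ℝ) (hg : Differentiable ℝ g)
    (hbound : ∀ x, |g x| ≤ c1)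
    (hlip : ∀ x y, |deriv g x - deriv g y| ≤ c3 * |x - y|) :
    ∀ x, |g x| ≤ c1 - (deriv g x) ^ 2 / (2 * c3) :=
  abs_le_sub_sq_deriv_general c1 c3 hc3 g hg hbound hlip
end

section
/- Let c2, c3 > 0 and let g : ℝ → ℝ be differentiable with |g'(t)| ≤ c2 for all t and |g'(s) − g'(t)| ≤ c3|s − t| for all s, t. Then for all x < y: ∫_x^y max(−c2, g'(x) − c3(t − x), g'(y) − c3(y − t)) dt ≤ g(y) − g(x) ≤ ∫_x^y min(c2, g'(x) + c3(t − x), g'(y) + c3(y − t)) dt. -/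
open intervalIntegral

/-!
By the fundamental theorem of calculus `g y - g x = ∫ t in x..y, g' t`, and at each
`t ∈ [x, y]` the bound on `g'` together with its Lipschitz estimates from the two
endpoints squeeze `g' t` between the two integrands; integrate.
-/

theorem continuous_of_abs_sub_le_mul {f : ℝ → ℝ} {K : ℝ}
    (hf : ∀ s t, |f s - f t| ≤ K * |s - t|) : Continuous f :=
  (LipschitzWith.of_dist_le' fun s t => by simpa only [Real.dist_eq] using hf s t).continuous

section Envelopes

variable {f : ℝ → ℝ} {M K x y t : ℝ}

theorem max_lipschitz_minorant_le (hM : ∀ t, |f t| ≤ M)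
    (hK : ∀ s t, |f s - f t| ≤ K * |s - t|) (hxt : x ≤ t) (hty : t ≤ y) :
    max (-M) (max (f x - K * (t - x)) (f y - K * (y - t))) ≤ f t := by
  have from_x := (abs_le.mp (hK x t)).2
  have from_y := (abs_le.mp (hK y t)).2
  rw [abs_sub_comm, abs_of_nonneg (sub_nonneg.mpr hxt)] at from_x
  rw [abs_of_nonneg (sub_nonneg.mpr hty)] at from_y
  exact max_le (neg_le_of_abs_le (hM t)) (max_le (by linarith) (by linarith))

theorem le_min_lipschitz_majorant (hM : ∀ t, |f t| ≤ M)
    (hK : ∀ s t, |f s - f t| ≤ K * |s - t|) (hxt : x ≤ t) (hty : t ≤ y) :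
    f t ≤ min M (min (f x + K * (t - x)) (f y + K * (y - t))) := by
  have from_x := (abs_le.mp (hK t x)).2
  have from_y := (abs_le.mp (hK t y)).2
  rw [abs_of_nonneg (sub_nonneg.mpr hxt)] at from_x
  rw [abs_sub_comm, abs_of_nonneg (sub_nonneg.mpr hty)] at from_y
  exact le_min (le_of_abs_le (hM t)) (le_min (by linarith) (by linarith))

end Envelopes

theorem increment_bracketed_general (c2 c3 : ℝ)
    (g : ℝ → ℝ) (hg : Differentiable ℝ g)
    (hbound : ∀ t, |deriv g t| ≤ c2)
    (hlip : ∀ s t, |deriv g s - deriv g t| ≤ c3 * |s - t|) :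
    ∀ x y : ℝ, x < y →
      (∫ t in x..y,
          max (-c2) (max (deriv g x - c3 * (t - x)) (deriv g y - c3 * (y - t))))
        ≤ g y - g x ∧
      g y - g x ≤
        ∫ t in x..y,
          min c2 (min (deriv g x + c3 * (t - x)) (deriv g y + c3 * (y - t))) := by
  intro x y hxy
  have hderiv_int : IntervalIntegrable (deriv g) MeasureTheory.volume x y :=
    (continuous_of_abs_sub_le_mul hlip).intervalIntegrable x y
  rw [← integral_deriv_eq_sub (fun t _ => hg.differentiableAt) hderiv_int]
  exact ⟨integral_mono_on hxy.le (Continuous.intervalIntegrable (by fun_prop) x y) hderiv_int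
      fun t ht => max_lipschitz_minorant_le hbound hlip ht.1 ht.2,
    integral_mono_on hxy.le hderiv_int (Continuous.intervalIntegrable (by fun_prop) x y)
      fun t ht => le_min_lipschitz_majorant hbound hlip ht.1 ht.2⟩

/-- the increment `g(y) − g(x)` is bracketed by the integrals of the
largest `c2`-bounded `c3`-Lipschitz minorant and the smallest `c2`-bounded `c3`-Lipschitz
majorant of `g'` consistent with its values at the endpoints. -/
theorem increment_bracketed (c2 c3 : ℝ) (hc2 : 0 < c2) (hc3 : 0 < c3)
    (g : ℝ → ℝ) (hg : Differentiable ℝ g)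
    (hbound : ∀ t, |deriv g t| ≤ c2)
    (hlip : ∀ s t, |deriv g s - deriv g t| ≤ c3 * |s - t|) :
    ∀ x y : ℝ, x < y →
      (∫ t in x..y,
          max (-c2) (max (deriv g x - c3 * (t - x)) (deriv g y - c3 * (y - t))))
        ≤ g y - g x ∧
      g y - g x ≤
        ∫ t in x..y,
          min c2 (min (deriv g x + c3 * (t - x)) (deriv g y + c3 * (y - t))) :=
  increment_bracketed_general c2 c3 g hg hbound hlip
end

section
/- Let P be the uniform distribution on X = (0, 1), so that ∇log p ≡ 0 and (T_P g)(x) = g'(x), and let G^{(1/2,1/2,1)} be the non-uniform classical Stein set with constants (c1, c2, c3) = (1/2, 1/2, 1). Then for every finitely supported probability measure Q on (0, 1), the Stein discrepancy equals the Wasserstein distance: S(Q, T_P, G^{(1/2,1/2,1)}) = d_W(Q, P). -/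
open MeasureTheory Filter Finset

noncomputable section

namespace Stein

/-- The open interval `(a, b) ⊆ ℝ` determined by extended-real endpoints. -/
def intervalX (a b : EReal) : Set ℝ := {x : ℝ | a < (x : EReal) ∧ (x : EReal) < b}

/-- The univariate non-uniform classical Stein set `G^{c1:3}` on `(a, b)`. -/
def steinSet1 (a b : EReal) (c1 c2 c3 : ℝ) : Set (ℝ → ℝ) :=
  {g | (∀ x ∈ intervalX a b, DifferentiableAt ℝ g x) ∧
       (∀ x ∈ intervalX a b, DifferentiableAt ℝ (deriv g) x) ∧
       (∀ x ∈ intervalX a b, |g x| ≤ c1) ∧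
       (∀ x ∈ intervalX a b, |deriv g x| ≤ c2) ∧
       (∀ x ∈ intervalX a b, ∀ y ∈ intervalX a b,
          |deriv g x - deriv g y| ≤ c3 * |x - y|) ∧
       (∀ r : ℝ, ((r : EReal) = a ∨ (r : EReal) = b) →
          Tendsto g (nhdsWithin r (intervalX a b)) (nhds 0))}

/-- The univariate Langevin Stein operator `(T_P g)(x) = g(x) (log p)'(x) + g'(x)`;
for the uniform target `p ≡ 1` this is just `g'(x)`. -/
def steinOp1 (p g : ℝ → ℝ) (x : ℝ) : ℝ :=
  g x * deriv (fun y => Real.log (p y)) x + deriv g x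

/-!
Every `g` in the Stein set has `∫₀¹ g' = 0` and a 1-Lipschitz derivative, so its Stein value
`|E_Q g'|` is the Wasserstein value `|E_Q h - E_P h|` of `h = g'`. Conversely, a 1-Lipschitz `h`
on `(0, 1)` extends to a 1-Lipschitz `H` on `ℝ`, whose moving average `K` over a window `δ` is
differentiable, 1-Lipschitz and `δ`-close to `H`. Then `g x = ∫₀ˣ (K - E_P K)` solves the Stein
equation `g' = K - E_P K` and lies in the Stein set with constants `(1/2, 1/2, 1)`, because a
1-Lipschitz function stays within `∫₀¹ |t - y| dy ≤ 1/2` of its mean on `[0, 1]`; so the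
Wasserstein value of `h` is within `2δ` of a Stein value.
-/

open Set

lemma intervalX_coe (a b : ℝ) : intervalX a b = Ioo a b := by
  ext x
  simp [intervalX]

lemma intervalX_zero_one : intervalX 0 1 = Ioo (0 : ℝ) 1 := by
  simpa using intervalX_coe 0 1

@[simp]
lemma steinOp1_const (c : ℝ) (g : ℝ → ℝ) (x : ℝ) : steinOp1 (fun _ => c) g x = deriv g x := by
  simp [steinOp1]

lemma integral_deriv_eq_zero_of_mem_steinSet1 {a b c1 c2 c3 : ℝ} (hab : a < b) {g : ℝ → ℝ}
    (hg : g ∈ steinSet1 a b c1 c2 c3) : ∫ x in Ioo a b, deriv g x = 0 := by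
  obtain ⟨hdiff, -, -, hbound, -, hlim⟩ := hg
  simp only [intervalX_coe, EReal.coe_eq_coe_iff] at hdiff hbound hlim
  have hint : IntegrableOn (deriv g) (Ioo a b) :=
    Measure.integrableOn_of_bounded (by simp) (measurable_deriv g).aestronglyMeasurable
      ((ae_restrict_iff' measurableSet_Ioo).2 (ae_of_all _ hbound))
  have ha := nhdsWithin_Ioo_eq_nhdsGT hab ▸ hlim a (Or.inl rfl)
  have hb := nhdsWithin_Ioo_eq_nhdsLT hab ▸ hlim b (Or.inr rfl)
  rw [← integral_Ioc_eq_integral_Ioo, ← intervalIntegral.integral_of_le hab.le,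
    intervalIntegral.integral_eq_sub_of_hasDerivAt_of_tendsto hab
      (fun x hx => (hdiff x hx).hasDerivAt)
      ((intervalIntegrable_iff_integrableOn_Ioo_of_le hab.le).2 hint) ha hb, sub_self]

def movingAverage (δ : ℝ) (H : ℝ → ℝ) (x : ℝ) : ℝ := δ⁻¹ * ∫ t in (0 : ℝ)..δ, H (x + t)

section MovingAverage

variable {H : ℝ → ℝ} {δ : ℝ}

lemma abs_inv_mul_integral_le {φ : ℝ → ℝ} {C : ℝ} (hδ : 0 < δ)
    (hφ : ∀ t ∈ Ioc 0 δ, |φ t| ≤ C) : |δ⁻¹ * ∫ t in (0 : ℝ)..δ, φ t| ≤ C := by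
  have := intervalIntegral.norm_integral_le_of_norm_le_const (a := 0) (b := δ) (f := φ)
    (C := C) (by simpa [uIoc_of_le hδ.le] using hφ)
  rw [abs_mul, abs_inv, abs_of_pos hδ, inv_mul_le_iff₀ hδ]
  simpa [abs_of_pos hδ, mul_comm] using this

lemma lipschitzWith_movingAverage {K : NNReal} (hH : LipschitzWith K H) (hδ : 0 < δ) :
    LipschitzWith K (movingAverage δ H) := by
  have hint : ∀ z, IntervalIntegrable (fun t => H (z + t)) volume 0 δ := fun z =>
    (hH.continuous.comp (continuous_const_add z)).intervalIntegrable _ _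
  refine LipschitzWith.of_dist_le_mul fun x y => ?_
  rw [Real.dist_eq, movingAverage, movingAverage, ← mul_sub,
    ← intervalIntegral.integral_sub (hint x) (hint y)]
  refine abs_inv_mul_integral_le hδ fun t _ => ?_
  simpa [Real.dist_eq] using hH.dist_le_mul (x + t) (y + t)

lemma abs_movingAverage_sub_le {K : NNReal} (hH : LipschitzWith K H) (hδ : 0 < δ) (x : ℝ) :
    |movingAverage δ H x - H x| ≤ K * δ := by
  have hconst : H x = δ⁻¹ * ∫ _ in (0 : ℝ)..δ, H x := by simp [hδ.ne']
  have hint : IntervalIntegrable (fun t => H (x + t)) volume 0 δ :=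
    (hH.continuous.comp (continuous_const_add x)).intervalIntegrable _ _
  rw [hconst, movingAverage, ← mul_sub,
    ← intervalIntegral.integral_sub hint intervalIntegrable_const]
  refine abs_inv_mul_integral_le hδ fun t ht => ?_
  calc |H (x + t) - H x| ≤ K * |x + t - x| := by
        simpa [Real.dist_eq] using hH.dist_le_mul (x + t) x
    _ ≤ K * δ := by
        rw [add_sub_cancel_left, abs_of_pos ht.1]
        exact mul_le_mul_of_nonneg_left ht.2 K.coe_nonneg

lemma hasDerivAt_movingAverage (hH : Continuous H) (x : ℝ) :
    HasDerivAt (movingAverage δ H) (δ⁻¹ * (H (x + δ) - H x)) x := by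
  have hprim : ∀ y, HasDerivAt (fun u => ∫ t in (0 : ℝ)..u, H t) (H y) y := fun y =>
    (hH.integral_hasStrictDerivAt 0 y).hasDerivAt
  have heq : movingAverage δ H =
      fun z => δ⁻¹ * ((∫ t in (0 : ℝ)..z + δ, H t) - ∫ t in (0 : ℝ)..z, H t) := by
    funext z
    rw [movingAverage, intervalIntegral.integral_comp_add_left H z, add_zero,
      intervalIntegral.integral_interval_sub_left (hH.intervalIntegrable _ _)
        (hH.intervalIntegrable _ _)]
  rw [heq]
  exact (((hprim (x + δ)).comp_add_const x δ).sub (hprim x)).const_mul δ⁻¹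

end MovingAverage

lemma abs_sub_setIntegral_le_half {K : ℝ → ℝ} (hK : LipschitzWith 1 K) {t : ℝ}
    (ht : t ∈ Icc (0 : ℝ) 1) : |K t - ∫ y in Ioo 0 1, K y| ≤ 1 / 2 := by
  have hKint : IntegrableOn K (Ioo 0 1) :=
    hK.continuous.integrableOn_Icc.mono_set Ioo_subset_Icc_self
  have haff : IntegrableOn (fun y : ℝ => t + (1 - 2 * t) * y) (Ioo 0 1) :=
    (by fun_prop : Continuous fun y : ℝ => t + (1 - 2 * t) * y).integrableOn_Icc.mono_set
      Ioo_subset_Icc_self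
  have hcenter : K t - ∫ y in Ioo 0 1, K y = ∫ y in Ioo 0 1, (K t - K y) := by
    rw [integral_sub (integrable_const (K t)) hKint]
    simp
  -- convexity of `|·|` at `t = (1 - t) • 0 + t • 1`: `|t - y| ≤ (1 - t) |0 - y| + t |1 - y|`
  have hconv : ∀ y ∈ Ioo (0 : ℝ) 1, |K t - K y| ≤ t + (1 - 2 * t) * y := fun y hy => by
    have := hK.dist_le_mul t y
    rw [NNReal.coe_one, one_mul, Real.dist_eq, Real.dist_eq] at this
    refine this.trans (abs_le.2 ⟨by nlinarith [ht.1, ht.2, hy.1, hy.2],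
      by nlinarith [ht.1, ht.2, hy.1, hy.2]⟩)
  have haff_eq : ∫ y in Ioo (0 : ℝ) 1, (t + (1 - 2 * t) * y) = 1 / 2 := by
    rw [← integral_Ioc_eq_integral_Ioo, ← intervalIntegral.integral_of_le zero_le_one]
    rw [intervalIntegral.integral_add intervalIntegrable_const
      (intervalIntegral.intervalIntegrable_id.const_mul _), intervalIntegral.integral_const_mul,
      integral_id, intervalIntegral.integral_const]
    norm_num
    ring
  calc |K t - ∫ y in Ioo 0 1, K y| ≤ ∫ y in Ioo 0 1, |K t - K y| := by
        rw [hcenter]; exact abs_integral_le_integral_abs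
    _ ≤ ∫ y in Ioo (0 : ℝ) 1, (t + (1 - 2 * t) * y) :=
        setIntegral_mono_on ((integrable_const (K t)).sub hKint).abs haff
          measurableSet_Ioo hconv
    _ = 1 / 2 := haff_eq

def steinSolution (K : ℝ → ℝ) (x : ℝ) : ℝ := ∫ t in (0 : ℝ)..x, (K t - ∫ y in Ioo 0 1, K y)

section SteinSolution

variable {K : ℝ → ℝ}

lemma hasDerivAt_steinSolution (hK : Continuous K) (x : ℝ) :
    HasDerivAt (steinSolution K) (K x - ∫ y in Ioo 0 1, K y) x :=
  ((hK.sub continuous_const).integral_hasStrictDerivAt 0 x).hasDerivAt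

lemma steinSolution_one (hK : Continuous K) : steinSolution K 1 = 0 := by
  rw [steinSolution, intervalIntegral.integral_sub (hK.intervalIntegrable _ _)
    intervalIntegrable_const, intervalIntegral.integral_of_le zero_le_one,
    integral_Ioc_eq_integral_Ioo]
  simp

lemma steinSolution_mem_steinSet1 (hK : LipschitzWith 1 K) (hK' : Differentiable ℝ K) :
    steinSolution K ∈ steinSet1 0 1 (1 / 2) (1 / 2) 1 := by
  set m := ∫ y in Ioo 0 1, K y
  have hg : ∀ x, HasDerivAt (steinSolution K) (K x - m) x :=
    hasDerivAt_steinSolution hK.continuous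
  have hderiv : deriv (steinSolution K) = fun x => K x - m := funext fun x => (hg x).deriv
  have hcenter : ∀ t ∈ Icc (0 : ℝ) 1, |K t - m| ≤ 1 / 2 := fun t ht =>
    abs_sub_setIntegral_le_half hK ht
  simp only [steinSet1, mem_ofPred_eq, intervalX_zero_one, hderiv]
  refine ⟨fun x _ => (hg x).differentiableAt, fun x _ => (hK' x).sub_const m, fun x hx => ?_,
    fun x hx => hcenter x (Ioo_subset_Icc_self hx), fun x _ y _ => ?_, fun r hr => ?_⟩
  · change |∫ t in (0 : ℝ)..x, (K t - m)| ≤ 1 / 2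
    have := intervalIntegral.norm_integral_le_of_norm_le_const (a := 0) (b := x)
      (f := fun t => K t - m) (C := 1 / 2) fun t ht => by
        rw [uIoc_of_le hx.1.le] at ht
        exact hcenter t ⟨ht.1.le, ht.2.trans hx.2.le⟩
    rw [Real.norm_eq_abs, sub_zero, abs_of_pos hx.1] at this
    linarith [hx.2]
  · simpa [Real.dist_eq] using hK.dist_le_mul x y
  · have hcont : Continuous (steinSolution K) := continuous_iff_continuousAt.2 fun x =>
      (hg x).continuousAt
    obtain rfl | rfl : r = 0 ∨ r = 1 := by simpa using hr
    · simpa [steinSolution] using (hcont.tendsto 0).mono_left nhdsWithin_le_nhds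
    · simpa [steinSolution_one hK.continuous] using
        (hcont.tendsto 1).mono_left nhdsWithin_le_nhds

end SteinSolution

/-- `E_Q f - E_P f` for `Q = ∑ₓ q x δₓ` and `P = Unif(0, 1)`. -/
def expectationGap (S : Finset ℝ) (q f : ℝ → ℝ) : ℝ := (∑ x ∈ S, q x * f x) - ∫ x in Ioo 0 1, f x

section ExpectationGap

variable {S : Finset ℝ} {q : ℝ → ℝ}

lemma abs_sum_mul_le (hq0 : ∀ x ∈ S, 0 ≤ q x) (hq1 : ∑ x ∈ S, q x = 1) {f : ℝ → ℝ} {c : ℝ}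
    (hf : ∀ x ∈ S, |f x| ≤ c) : |∑ x ∈ S, q x * f x| ≤ c :=
  calc |∑ x ∈ S, q x * f x| ≤ ∑ x ∈ S, |q x * f x| := abs_sum_le_sum_abs _ _
    _ ≤ ∑ x ∈ S, q x * c := sum_le_sum fun x hx => by
        rw [abs_mul, abs_of_nonneg (hq0 x hx)]
        exact mul_le_mul_of_nonneg_left (hf x hx) (hq0 x hx)
    _ = c := by rw [← sum_mul, hq1, one_mul]

lemma sum_mul_sub_const (hq1 : ∑ x ∈ S, q x = 1) (f : ℝ → ℝ) (c : ℝ) :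
    ∑ x ∈ S, q x * (f x - c) = (∑ x ∈ S, q x * f x) - c := by
  simp [mul_sub, sum_sub_distrib, ← sum_mul, hq1]

lemma sum_mul_steinOp1_eq_expectationGap_deriv {c1 c2 c3 : ℝ} {g : ℝ → ℝ}
    (hg : g ∈ steinSet1 0 1 c1 c2 c3) :
    ∑ x ∈ S, q x * steinOp1 (fun _ => 1) g x = expectationGap S q (deriv g) := by
  simp [expectationGap, integral_deriv_eq_zero_of_mem_steinSet1 zero_lt_one hg]

lemma sum_mul_steinOp1_steinSolution_eq_expectationGap (hq1 : ∑ x ∈ S, q x = 1) {K : ℝ → ℝ} (hK : Continuous K) :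
    ∑ x ∈ S, q x * steinOp1 (fun _ => 1) (steinSolution K) x = expectationGap S q K := by
  simp only [steinOp1_const, (hasDerivAt_steinSolution hK _).deriv]
  exact sum_mul_sub_const hq1 _ _

lemma abs_expectationGap_le_half (hq0 : ∀ x ∈ S, 0 ≤ q x) (hq1 : ∑ x ∈ S, q x = 1)
    (hS : ∀ x ∈ S, x ∈ Icc (0 : ℝ) 1) {K : ℝ → ℝ} (hK : LipschitzWith 1 K) :
    |expectationGap S q K| ≤ 1 / 2 := by
  rw [expectationGap, ← sum_mul_sub_const hq1]
  exact abs_sum_mul_le hq0 hq1 fun x hx => abs_sub_setIntegral_le_half hK (hS x hx)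

lemma abs_expectationGap_le (hq0 : ∀ x ∈ S, 0 ≤ q x) (hq1 : ∑ x ∈ S, q x = 1) {f : ℝ → ℝ}
    {c : ℝ} (hf : ∀ x, |f x| ≤ c) : |expectationGap S q f| ≤ 2 * c := by
  have hsum := abs_sum_mul_le hq0 hq1 fun x _ => hf x
  have hint : |∫ x in Ioo (0 : ℝ) 1, f x| ≤ c := by
    have := norm_setIntegral_le_of_norm_le_const (s := Ioo (0 : ℝ) 1) (μ := volume) (C := c)
      (by simp) fun x _ => (Real.norm_eq_abs (f x)).symm ▸ hf x
    rwa [Real.norm_eq_abs, measureReal_def, Real.volume_Ioo, sub_zero, ENNReal.ofReal_one,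
      ENNReal.toReal_one, mul_one] at this
  have := abs_sub (∑ x ∈ S, q x * f x) (∫ x in Ioo (0 : ℝ) 1, f x)
  rw [expectationGap]
  linarith

lemma expectationGap_sub {f g : ℝ → ℝ} (hf : IntegrableOn f (Ioo 0 1))
    (hg : IntegrableOn g (Ioo 0 1)) :
    expectationGap S q (f - g) = expectationGap S q f - expectationGap S q g := by
  simp only [expectationGap, Pi.sub_apply, mul_sub, sum_sub_distrib, integral_sub hf hg]
  ring

lemma exists_lipschitzWith_expectationGap_eq (hS : ∀ x ∈ S, x ∈ Ioo (0 : ℝ) 1) {h : ℝ → ℝ}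
    (hh : LipschitzOnWith 1 h (Ioo 0 1)) :
    ∃ H, LipschitzWith 1 H ∧ expectationGap S q h = expectationGap S q H := by
  obtain ⟨H, hH, heq⟩ := hh.extend_real
  refine ⟨H, hH, ?_⟩
  rw [expectationGap, expectationGap, sum_congr rfl fun x hx => by rw [heq (hS x hx)],
    setIntegral_congr_fun measurableSet_Ioo heq]

lemma exists_mem_steinSet1_abs_expectationGap_le (hq0 : ∀ x ∈ S, 0 ≤ q x)
    (hq1 : ∑ x ∈ S, q x = 1) {H : ℝ → ℝ} (hH : LipschitzWith 1 H) {δ : ℝ} (hδ : 0 < δ) :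
    ∃ g ∈ steinSet1 0 1 (1 / 2) (1 / 2) 1,
      |expectationGap S q H| ≤ |∑ x ∈ S, q x * steinOp1 (fun _ => 1) g x| + 2 * δ := by
  set K := movingAverage δ H
  have hK : LipschitzWith 1 K := lipschitzWith_movingAverage hH hδ
  have hK' : Differentiable ℝ K := fun x =>
    (hasDerivAt_movingAverage hH.continuous x).differentiableAt
  refine ⟨steinSolution K, steinSolution_mem_steinSet1 hK hK', ?_⟩
  rw [sum_mul_steinOp1_steinSolution_eq_expectationGap hq1 hK.continuous]
  have hclose : |expectationGap S q (H - K)| ≤ 2 * δ :=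
    abs_expectationGap_le hq0 hq1 fun x => by
      simpa [abs_sub_comm] using abs_movingAverage_sub_le hH hδ x
  rw [expectationGap_sub (hH.continuous.integrableOn_Icc.mono_set Ioo_subset_Icc_self)
    (hK.continuous.integrableOn_Icc.mono_set Ioo_subset_Icc_self)] at hclose
  linarith [abs_sub_abs_le_abs_sub (expectationGap S q H) (expectationGap S q K)]

end ExpectationGap

/-- for the `Unif(0,1)` target, the non-uniform Stein discrepancy with
Stein factors `(1/2, 1/2, 1)` equals the Wasserstein distance between `Q` and `P`. -/
theorem steinDiscr_eq_wasserstein_uniform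
    (S : Finset ℝ) (hS : ∀ x ∈ S, x ∈ Set.Ioo (0 : ℝ) 1)
    (q : ℝ → ℝ) (hq0 : ∀ x ∈ S, 0 ≤ q x) (hq1 : ∑ x ∈ S, q x = 1) :
    sSup {r | ∃ g ∈ steinSet1 (0 : EReal) (1 : EReal) (1 / 2) (1 / 2) 1,
        r = |∑ x ∈ S, q x * steinOp1 (fun _ => 1) g x|} =
      sSup {r | ∃ h : ℝ → ℝ,
        (∀ x ∈ Set.Ioo (0 : ℝ) 1, ∀ y ∈ Set.Ioo (0 : ℝ) 1, |h x - h y| ≤ |x - y|) ∧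
        r = |(∑ x ∈ S, q x * h x) - ∫ x in Set.Ioo (0 : ℝ) 1, h x|} := by
  set A := {r | ∃ g ∈ steinSet1 (0 : EReal) (1 : EReal) (1 / 2) (1 / 2) 1,
    r = |∑ x ∈ S, q x * steinOp1 (fun _ => 1) g x|}
  set B := {r | ∃ h : ℝ → ℝ,
    (∀ x ∈ Set.Ioo (0 : ℝ) 1, ∀ y ∈ Set.Ioo (0 : ℝ) 1, |h x - h y| ≤ |x - y|) ∧
    r = |(∑ x ∈ S, q x * h x) - ∫ x in Set.Ioo (0 : ℝ) 1, h x|}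
  have hA : A.Nonempty := ⟨_, _, steinSolution_mem_steinSet1 (LipschitzWith.const' 0)
    (differentiable_const 0), rfl⟩
  have hAB : A ⊆ B := by
    rintro _ ⟨g, hg, rfl⟩
    have hderiv_lip := hg.2.2.2.2.1
    rw [intervalX_zero_one] at hderiv_lip
    exact ⟨deriv g, fun x hx y hy => by simpa using hderiv_lip x hx y hy,
      by rw [sum_mul_steinOp1_eq_expectationGap_deriv hg]; rfl⟩
  have hBgap : ∀ r ∈ B, ∃ H, LipschitzWith 1 H ∧ r = |expectationGap S q H| := by
    rintro _ ⟨h, hh, rfl⟩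
    obtain ⟨H, hH, hgap⟩ := exists_lipschitzWith_expectationGap_eq hS
      (LipschitzOnWith.of_dist_le_mul fun x hx y hy => by simpa [Real.dist_eq] using hh x hx y hy)
    exact ⟨H, hH, congrArg abs hgap⟩
  have hB : ∀ r ∈ B, r ≤ 1 / 2 := fun r hr => by
    obtain ⟨H, hH, rfl⟩ := hBgap r hr
    exact abs_expectationGap_le_half hq0 hq1 (fun x hx => Ioo_subset_Icc_self (hS x hx)) hH
  refine le_antisymm (csSup_le_csSup ⟨1 / 2, hB⟩ hA hAB) (csSup_le (hA.mono hAB) fun r hr => ?_)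
  obtain ⟨H, hH, rfl⟩ := hBgap r hr
  refine le_of_forall_pos_le_add fun ε hε => ?_
  obtain ⟨g, hg, hle⟩ := exists_mem_steinSet1_abs_expectationGap_le hq0 hq1 hH (half_pos hε)
  have := le_csSup ⟨1 / 2, fun r hr => hB r (hAB hr)⟩ ⟨g, hg, rfl⟩
  linarith

end Stein
end
end
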